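/- Bellman–Ford characterization. For the Bellman–Ford iterates d from source s, for every t ≥ 0 and every vertex v: d t v equals the infimum of the weights of all walks from s to v with at most t edges (and equals ⊤ if no such walk exists). Since there are only finitely many such walks, this infimum is attained whenever it is not ⊤. -/

import Mathlib

/-- `IsWalk E p t a b` : `p 0 = a`, `p t = b`, and each consecutive pair is an edge. -/
def IsWalk {V : Type*} (E : V → V → Prop) (p : ℕ → V) (t : ℕ) (a b : V) : Prop :=
  p 0 = a ∧ p t = b ∧ ∀ i < t, E (p i) (p (i + 1))

/-- Weight of a walk with `t` edges. -/
def walkWeight {V : Type*} (w : V → V → ℝ) (p : ℕ → V) (t : ℕ) : ℝ :=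
  ∑ i ∈ Finset.range t, w (p i) (p (i + 1))

open Classical in
/-- Bellman–Ford iterates from source `s`. -/
noncomputable def BF {V : Type*} (E : V → V → Prop) (w : V → V → ℝ) (s : V) :
    ℕ → V → EReal
  | 0, v => if v = s then 0 else ⊤
  | (t + 1), v =>
      min (BF E w s t v) (⨅ u : {u : V // E u v}, (BF E w s t u.1 + (w u.1 v : EReal)))

/-!
Each iterate is a lower bound: a walk with `l` edges ending in the edge `u → v` is dominated
step by step by the recurrence, and the iterates decrease in `t`. Conversely, by induction on `t`,
a finite value `d (t+1) v` is either `d t v` or is attained at some in-neighbour `u` (the infimum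
ranges over a finite set), so a walk realizing `d t u` extended by the edge `u → v` realizes it.
-/

section Walk

variable {V : Type*} {E : V → V → Prop} {p : ℕ → V} {l : ℕ} {a b : V}

lemma IsWalk.eq_of_zero (h : IsWalk E p 0 a b) : a = b :=
  h.1.symm.trans h.2.1

lemma IsWalk.of_succ (h : IsWalk E p (l + 1) a b) : IsWalk E p l a (p l) ∧ E (p l) b :=
  ⟨⟨h.1, rfl, fun i hi => h.2.2 i (hi.trans l.lt_succ_self)⟩, h.2.1 ▸ h.2.2 l l.lt_succ_self⟩

def snocVertex (p : ℕ → V) (l : ℕ) (v : V) : ℕ → V :=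
  fun i => if i ≤ l then p i else v

lemma snocVertex_of_le {i : ℕ} (v : V) (hi : i ≤ l) : snocVertex p l v i = p i := if_pos hi

lemma snocVertex_succ (v : V) : snocVertex p l v (l + 1) = v := if_neg (by omega)

lemma IsWalk.snocVertex {u v : V} (h : IsWalk E p l a u) (huv : E u v) :
    IsWalk E (snocVertex p l v) (l + 1) a v := by
  obtain ⟨h0, hl, hedge⟩ := h
  refine ⟨(snocVertex_of_le v l.zero_le).trans h0, snocVertex_succ v, fun i hi => ?_⟩
  rcases Nat.lt_succ_iff_lt_or_eq.mp hi with hi | rfl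
  · rw [snocVertex_of_le v hi.le, snocVertex_of_le v hi]
    exact hedge i hi
  · rwa [snocVertex_of_le v le_rfl, snocVertex_succ, hl]

lemma walkWeight_succ (w : V → V → ℝ) (p : ℕ → V) (l : ℕ) :
    walkWeight w p (l + 1) = walkWeight w p l + w (p l) (p (l + 1)) :=
  Finset.sum_range_succ _ _

lemma walkWeight_congr (w : V → V → ℝ) {q : ℕ → V} (h : ∀ i ≤ l, p i = q i) :
    walkWeight w p l = walkWeight w q l :=
  Finset.sum_congr rfl fun i hi => by
    rw [Finset.mem_range] at hi
    rw [h i hi.le, h (i + 1) hi]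

lemma walkWeight_snocVertex (w : V → V → ℝ) (p : ℕ → V) (l : ℕ) (v : V) :
    walkWeight w (snocVertex p l v) (l + 1) = walkWeight w p l + w (p l) v := by
  rw [walkWeight_succ, snocVertex_of_le v le_rfl, snocVertex_succ,
    walkWeight_congr w fun i hi => snocVertex_of_le v hi]

end Walk

section BellmanFord

variable {V : Type*} (E : V → V → Prop) (w : V → V → ℝ) (s : V)

lemma BF_zero_self : BF E w s 0 s = 0 := by
  simp [BF]

lemma BF_zero_of_ne {v : V} (hv : v ≠ s) : BF E w s 0 v = ⊤ := by
  simp [BF, hv]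

lemma BF_succ_le (t : ℕ) (v : V) : BF E w s (t + 1) v ≤ BF E w s t v :=
  min_le_left _ _

lemma BF_succ_le_of_edge (t : ℕ) {u v : V} (huv : E u v) :
    BF E w s (t + 1) v ≤ BF E w s t u + w u v :=
  (min_le_right _ _).trans (iInf_le_of_le ⟨u, huv⟩ le_rfl)

lemma BF_antitone : Antitone (BF E w s) :=
  antitone_nat_of_succ_le fun t v => BF_succ_le E w s t v

lemma BF_length_le_walkWeight {p : ℕ → V} {l : ℕ} {v : V} (hp : IsWalk E p l s v) :
    BF E w s l v ≤ walkWeight w p l := by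
  induction l generalizing v with
  | zero => simp [← hp.eq_of_zero, BF_zero_self, walkWeight]
  | succ l ih =>
    obtain ⟨hpre, hedge⟩ := hp.of_succ
    calc BF E w s (l + 1) v ≤ BF E w s l (p l) + w (p l) v := BF_succ_le_of_edge E w s l hedge
      _ ≤ walkWeight w p l + w (p l) v := by gcongr; exact ih hpre
      _ = walkWeight w p (l + 1) := by rw [walkWeight_succ, hp.2.1, EReal.coe_add]

lemma BF_le_walkWeight {p : ℕ → V} {l t : ℕ} {v : V} (hl : l ≤ t) (hp : IsWalk E p l s v) :
    BF E w s t v ≤ walkWeight w p l :=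
  (BF_antitone E w s hl v).trans (BF_length_le_walkWeight E w s hp)

lemma BF_succ_eq_self_or_exists_edge [Finite V] (t : ℕ) (v : V) :
    BF E w s (t + 1) v = BF E w s t v ∨
      ∃ u, E u v ∧ BF E w s (t + 1) v = BF E w s t u + w u v := by
  rcases isEmpty_or_nonempty {u // E u v} with hempty | hne
  · left
    simp [BF, iInf_of_empty]
  · obtain ⟨u, hu⟩ := exists_eq_ciInf_of_finite
      (f := fun u : {u // E u v} => BF E w s t u.1 + (w u.1 v : EReal))
    rcases min_choice (BF E w s t v) (⨅ u : {u // E u v}, (BF E w s t u.1 + (w u.1 v : EReal)))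
      with h | h
    · exact Or.inl h
    · exact Or.inr ⟨u.1, u.2, h.trans hu.symm⟩

lemma exists_walk_walkWeight_eq_BF [Finite V] {t : ℕ} {v : V} (hv : BF E w s t v ≠ ⊤) :
    ∃ (p : ℕ → V) (l : ℕ), l ≤ t ∧ IsWalk E p l s v ∧ (walkWeight w p l : EReal) = BF E w s t v := by
  induction t generalizing v with
  | zero =>
    have hvs : v = s := by_contra fun h => hv (BF_zero_of_ne E w s h)
    subst hvs
    exact ⟨fun _ => v, 0, le_rfl, ⟨rfl, rfl, nofun⟩, by simp [BF_zero_self, walkWeight]⟩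
  | succ t ih =>
    rcases BF_succ_eq_self_or_exists_edge E w s t v with heq | ⟨u, huv, heq⟩
    · obtain ⟨p, l, hl, hp, hweight⟩ := ih (heq ▸ hv)
      exact ⟨p, l, hl.trans t.le_succ, hp, hweight.trans heq.symm⟩
    · have hu : BF E w s t u ≠ ⊤ := by
        rintro htop
        exact hv (heq.trans (htop ▸ EReal.top_add_coe _))
      obtain ⟨p, l, hl, hp, hweight⟩ := ih hu
      refine ⟨snocVertex p l v, l + 1, by omega, hp.snocVertex huv, ?_⟩
      rw [walkWeight_snocVertex, hp.2.1, EReal.coe_add, hweight, heq]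

end BellmanFord

theorem bellmanFord_characterization_general
    {V : Type*} [Fintype V]
    (E : V → V → Prop) (w : V → V → ℝ) (s : V) :
    (∀ (t : ℕ) (v : V),
      BF E w s t v =
        ⨅ (p : ℕ → V) (l : ℕ) (_ : l ≤ t) (_ : IsWalk E p l s v),
          (walkWeight w p l : EReal)) ∧
    (∀ (t : ℕ) (v : V), BF E w s t v ≠ ⊤ →
      ∃ (p : ℕ → V) (l : ℕ), l ≤ t ∧ IsWalk E p l s v ∧
        (walkWeight w p l : EReal) = BF E w s t v) := by
  refine ⟨fun t v => le_antisymm ?_ ?_, fun t v => exists_walk_walkWeight_eq_BF E w s⟩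
  · exact le_iInf₂ fun p l => le_iInf₂ fun hl hp => BF_le_walkWeight E w s hl hp
  · by_cases htop : BF E w s t v = ⊤
    · exact htop ▸ le_top
    · obtain ⟨p, l, hl, hp, hweight⟩ := exists_walk_walkWeight_eq_BF E w s htop
      exact hweight ▸ iInf₂_le_of_le p l (iInf₂_le hl hp)

/-- Bellman–Ford characterization: `d t v` is the infimum of weights of walks
from `s` to `v` with at most `t` edges (and `⊤` if there is none), and this
infimum is attained whenever it is not `⊤`. -/
theorem bellmanFord_characterization
    {V : Type*} [Fintype V] [Nonempty V]
    (E : V → V → Prop) (w : V → V → ℝ) (s : V) :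
    (∀ (t : ℕ) (v : V),
      BF E w s t v =
        ⨅ (p : ℕ → V) (l : ℕ) (_ : l ≤ t) (_ : IsWalk E p l s v),
          (walkWeight w p l : EReal)) ∧
    (∀ (t : ℕ) (v : V), BF E w s t v ≠ ⊤ →
      ∃ (p : ℕ → V) (l : ℕ), l ≤ t ∧ IsWalk E p l s v ∧
        (walkWeight w p l : EReal) = BF E w s t v) :=
  bellmanFord_characterization_general E w s
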